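/- If a word α of length at least 2 has a renovation event at some position n ≥ 2 (meaning α_{n+k} ≤ k+1 for all 0 ≤ k ≤ L(α)−n), then ε_X(α) = 0 for every admissible configuration X. -/

import Mathlib

open scoped Classical

/-- A configuration of the infinite-bin model: number of balls in each bin. -/
abbrev Config := ℤ → ℕ∞

/-- Admissible configuration: nonempty bins form a semi-infinite interval, and
every bin to the left of an infinite bin is infinite. -/
def IsAdmissible (X : Config) : Prop :=
  (∃ m : ℤ, ∀ j : ℤ, X j ≠ 0 ↔ j ≤ m) ∧ ∀ j : ℤ, X j = ⊤ → X (j - 1) = ⊤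

/-- N(X,k): number of balls in bins of index ≥ k. -/
noncomputable def Nballs (X : Config) (k : ℤ) : ℕ∞ := ∑' j : {j : ℤ // k ≤ j}, X j

/-- B(X,ξ): leftmost position such that there are fewer than ξ balls to its right. -/
noncomputable def Bpos (X : Config) (ξ : ℕ) : ℤ := sInf {j : ℤ | Nballs X j < (ξ : ℕ∞)}

/-- The move of type ξ: add one ball in the bin of index B(X,ξ). -/
noncomputable def Phi (ξ : ℕ) (X : Config) : Config :=
  fun j => X j + (if j = Bpos X ξ then 1 else 0)

/-- The move of type ξ ∈ ℕ ∪ {∞}, with Φ_∞ = id. -/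
noncomputable def PhiE (ξ : ℕ∞) (X : Config) : Config :=
  if ξ = ⊤ then X else Phi ξ.toNat X

/-- The shift operator τ. -/
def shift (X : Config) : Config := fun j => X (j - 1)

/-- Configuration obtained after applying successively the moves listed in α. -/
noncomputable def applyWord (X : Config) (α : List ℕ) : Config :=
  α.foldl (fun Y a => Phi a Y) X

/-- d_X(α): displacement of the front after performing the word α. -/
noncomputable def dX (X : Config) (α : List ℕ) : ℤ :=
  Bpos (applyWord X α) 1 - Bpos X 1

/-- α ∈ P_X : α is nonempty and its last move places a ball in a previously empty bin. -/
def inP (X : Config) (α : List ℕ) : Prop :=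
  ∃ β a, α = β ++ [a] ∧ applyWord X β (Bpos (applyWord X β) a) = 0

/-- ε_X(α) = 1_{α ∈ P_X} - 1_{ϖα ∈ P_X}. -/
noncomputable def eps (X : Config) (α : List ℕ) : ℤ :=
  (if inP X α then 1 else 0) - (if inP X α.tail then 1 else 0)

/-!
Split `α = δ ++ γ` at the renovation event, so that `δ` is nonempty and the `k`-th letter of `γ`
(counting from `0`) is at most `k + 1`. Let `m` be the last nonempty bin of `applyWord X δ`.
Before the `k`-th move of `γ`, bin `m` and the `k` balls that `γ` has already placed to its
right make at least `k + 1` balls in the bins `≥ m`, so that move, of type `≤ k + 1`, lands to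
the right of `m`. Hence `γ` evolves there exactly as it does from `infiniteLeft` (infinitely many
balls in every bin `≤ 0`), shifted by `m`. Whether the last move fills an empty bin is therefore
independent of `δ`, and is the same for `α` and for `α.tail = δ.tail ++ γ`.
-/

open Set Function

theorem ENat.summable {ι : Type*} (f : ι → ℕ∞) : Summable f :=
  ⟨_, hasSum_of_isLUB _ (isLUB_sSup _)⟩

section Nballs

variable {Z : Config} {j k : ℤ}

theorem Nballs_eq_tsum_indicator (Z : Config) (k : ℤ) :
    Nballs Z k = ∑' j, (Ici k).indicator Z j :=
  tsum_subtype (Ici k) Z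

theorem Nballs_antitone (Z : Config) : Antitone (Nballs Z) := by
  intro j k hjk
  simp only [Nballs_eq_tsum_indicator]
  exact Summable.tsum_le_tsum
    (fun i => indicator_le_indicator_of_subset (Ici_subset_Ici.2 hjk) (fun _ => zero_le) i)
    (ENat.summable _) (ENat.summable _)

theorem le_Nballs (h : k ≤ j) : Z j ≤ Nballs Z k :=
  (ENat.summable fun i : {i : ℤ // k ≤ i} => Z i).le_tsum' ⟨j, h⟩

theorem Nballs_eq_zero (h : ∀ j, k ≤ j → Z j = 0) : Nballs Z k = 0 :=
  (ENat.summable _).tsum_eq_zero_iff.2 fun j => h j j.2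

theorem Nballs_eq_add_Nballs_add_one (Z : Config) (k : ℤ) :
    Nballs Z k = Z k + Nballs Z (k + 1) := by
  have hsplit : (Ici k).indicator Z =
      fun j => (if j = k then Z j else 0) + (Ici (k + 1)).indicator Z j := by
    funext j
    rcases eq_or_ne j k with rfl | hjk
    · simp
    · simp only [indicator, mem_Ici, if_neg hjk, zero_add]
      congr 1
      exact propext (by omega)
  rw [Nballs_eq_tsum_indicator, hsplit, (ENat.summable _).tsum_add (ENat.summable _), tsum_ite_eq,
    Nballs_eq_tsum_indicator]

theorem Nballs_Phi (a : ℕ) (Z : Config) (k : ℤ) :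
    Nballs (Phi a Z) k = Nballs Z k + if k ≤ Bpos Z a then 1 else 0 := by
  have hsplit : (Ici k).indicator (Phi a Z) =
      fun j => (Ici k).indicator Z j + if j = Bpos Z a then (if k ≤ j then 1 else 0) else 0 := by
    funext j
    simp only [indicator, mem_Ici, Phi]
    split_ifs <;> simp_all
  rw [Nballs_eq_tsum_indicator, hsplit, (ENat.summable _).tsum_add (ENat.summable _), tsum_ite_eq,
    Nballs_eq_tsum_indicator]

end Nballs

section Bpos

variable {Z : Config} {m b : ℤ} {a : ℕ}

theorem Bpos_eq_of_Nballs_lt_of_le (hlt : Nballs Z b < a) (hle : a ≤ Nballs Z (b - 1)) :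
    Bpos Z a = b := by
  refine IsLeast.csInf_eq ⟨hlt, fun j hj => ?_⟩
  by_contra! hjb
  exact (hle.trans (Nballs_antitone Z (by omega : j ≤ b - 1))).not_gt hj

theorem natCast_le_Nballs_sub (hZ : support Z = Iic m) (k : ℕ) :
    (k : ℕ∞) ≤ Nballs Z (m + 1 - k) := by
  induction k with
  | zero => simp
  | succ k ih =>
    have hmem : Z (m + 1 - (k + 1 : ℕ)) ≠ 0 := hZ.ge (show _ ≤ m by omega)
    rw [Nballs_eq_add_Nballs_add_one, show m + 1 - ((k + 1 : ℕ) : ℤ) + 1 = m + 1 - k by omega,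
      Nat.cast_succ, add_comm (k : ℕ∞)]
    exact add_le_add (Order.one_le_iff_ne_zero.2 hmem) ih

theorem bddBelow_setOf_Nballs_lt (hZ : support Z = Iic m) (a : ℕ) :
    BddBelow {j | Nballs Z j < a} := by
  refine ⟨m + 1 - a, fun j hj => ?_⟩
  by_contra! hja
  exact ((natCast_le_Nballs_sub hZ a).trans (Nballs_antitone Z hja.le)).not_gt hj

theorem Nballs_add_one_lt (hZ : support Z ⊆ Iic m) (ha : 1 ≤ a) : Nballs Z (m + 1) < a := by
  rw [Nballs_eq_zero fun j hj => notMem_support.1 fun hj' => by have := hZ hj'; simp at this; omega]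
  exact_mod_cast ha

theorem Bpos_le_add_one (hZ : support Z = Iic m) (ha : 1 ≤ a) : Bpos Z a ≤ m + 1 :=
  csInf_le (bddBelow_setOf_Nballs_lt hZ a) (Nballs_add_one_lt hZ.subset ha)

theorem Nballs_Bpos_lt (hZ : support Z = Iic m) (ha : 1 ≤ a) : Nballs Z (Bpos Z a) < a :=
  Int.csInf_mem ⟨m + 1, Nballs_add_one_lt hZ.subset ha⟩ (bddBelow_setOf_Nballs_lt hZ a)

theorem le_Nballs_of_lt_Bpos (hZ : support Z = Iic m) {j : ℤ} (hj : j < Bpos Z a) :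
    a ≤ Nballs Z j :=
  not_lt.1 (notMem_of_lt_csInf (s := {j | Nballs Z j < a}) hj (bddBelow_setOf_Nballs_lt hZ a))

theorem support_Phi (hZ : support Z = Iic m) (ha : 1 ≤ a) :
    support (Phi a Z) = Iic (max m (Bpos Z a)) := by
  ext j
  have hB := Bpos_le_add_one hZ ha
  have hZj : Z j = 0 ↔ m < j := by rw [← not_le, ← mem_Iic, ← hZ, notMem_support]
  simp only [mem_support, mem_Iic, Phi, ne_eq, add_eq_zero, ite_eq_right_iff, one_ne_zero,
    imp_false, not_and, not_not, hZj]
  omega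

end Bpos

section applyWord

variable {X : Config} {m : ℤ} {α : List ℕ}

theorem applyWord_append (X : Config) (α β : List ℕ) :
    applyWord X (α ++ β) = applyWord (applyWord X α) β :=
  List.foldl_append

theorem applyWord_append_singleton (X : Config) (α : List ℕ) (a : ℕ) :
    applyWord X (α ++ [a]) = Phi a (applyWord X α) :=
  applyWord_append X α [a]

theorem le_applyWord (X : Config) (α : List ℕ) (j : ℤ) : X j ≤ applyWord X α j := by
  induction α generalizing X with
  | nil => exact le_rfl
  | cons a α ih => exact le_self_add.trans (ih (Phi a X))

theorem exists_support_applyWord_eq_Iic (hX : support X = Iic m) (hα : ∀ a ∈ α, 1 ≤ a) :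
    ∃ m', support (applyWord X α) = Iic m' := by
  induction α generalizing X m with
  | nil => exact ⟨m, hX⟩
  | cons a α ih =>
    exact ih (support_Phi hX (hα a List.mem_cons_self)) 
      fun b hb => hα b (List.mem_cons_of_mem a hb)

theorem inP_append_singleton_iff (X : Config) (α : List ℕ) (a : ℕ) :
    inP X (α ++ [a]) ↔ applyWord X α (Bpos (applyWord X α) a) = 0 := by
  constructor
  · rintro ⟨β, b, hαβ, h⟩
    rw [← List.concat_eq_append, ← List.concat_eq_append, List.concat_inj] at hαβ
    obtain ⟨rfl, rfl⟩ := hαβ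
    exact h
  · exact fun h => ⟨α, a, rfl, h⟩

end applyWord

/-- `α` has a renovation event at position `n` exactly when `α.drop (n - 1)` is renovating
(all letters being `≥ 1`). -/
def IsRenovating (β : List ℕ) : Prop :=
  ∀ k (hk : k < β.length), 1 ≤ β[k] ∧ β[k] ≤ k + 1

theorem IsRenovating.one_le {β : List ℕ} (hβ : IsRenovating β) : ∀ a ∈ β, 1 ≤ a := by
  intro a ha
  obtain ⟨k, hk, rfl⟩ := List.mem_iff_getElem.1 ha
  exact (hβ k hk).1

theorem isRenovating_append_singleton {β : List ℕ} {a : ℕ} :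
    IsRenovating (β ++ [a]) ↔ IsRenovating β ∧ 1 ≤ a ∧ a ≤ β.length + 1 := by
  constructor
  · intro h
    refine ⟨fun k hk => ?_, ?_⟩
    · have := h k (by simp; omega)
      rwa [List.getElem_append_left hk] at this
    · simpa using h β.length (by simp)
  · rintro ⟨hβ, ha⟩ k hk
    rw [List.getElem_append]
    split_ifs with hkβ
    · exact hβ k hkβ
    · simp at hk
      simpa [show k = β.length by omega] using ha

section Glue

variable {Z V : Config} {m mV j : ℤ} {a : ℕ}

noncomputable def infiniteLeft : Config := fun j => if j ≤ 0 then ⊤ else 0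

def glue (Z : Config) (m : ℤ) (V : Config) : Config := fun i => if i ≤ m then Z i else V (i - m)

theorem support_infiniteLeft : support infiniteLeft = Iic 0 := by
  ext j
  by_cases h : j ≤ 0 <;> simp [infiniteLeft, h]

theorem applyWord_infiniteLeft_of_nonpos (β : List ℕ) :
    ∀ j ≤ 0, applyWord infiniteLeft β j = ⊤ := fun j hj =>
  top_le_iff.1 (by simpa [infiniteLeft, hj] using le_applyWord infiniteLeft β j)

theorem one_le_Bpos (hV : support V = Iic mV) (hV0 : ∀ j ≤ 0, V j = ⊤) (ha : 1 ≤ a) :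
    1 ≤ Bpos V a := by
  by_contra! h
  have htop : Nballs V (Bpos V a) = ⊤ :=
    top_le_iff.1 ((hV0 _ (by omega)).symm.trans_le (le_Nballs le_rfl))
  exact not_top_lt (htop ▸ Nballs_Bpos_lt hV ha)

theorem Nballs_applyWord_infiniteLeft_one {β : List ℕ} (hβ : ∀ a ∈ β, 1 ≤ a) :
    Nballs (applyWord infiniteLeft β) 1 = β.length := by
  induction β using List.reverseRecOn with
  | nil =>
    exact Nballs_eq_zero fun j hj => by simp [applyWord, infiniteLeft, show ¬ j ≤ 0 by omega]
  | append_singleton β a ih =>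
    have hβ' : ∀ b ∈ β, 1 ≤ b := fun b hb => hβ b (List.mem_append_left _ hb)
    obtain ⟨mV, hV⟩ := exists_support_applyWord_eq_Iic support_infiniteLeft hβ'
    rw [applyWord_append_singleton, Nballs_Phi, if_pos (one_le_Bpos hV
      (applyWord_infiniteLeft_of_nonpos β) (hβ a (by simp))), ih hβ']
    simp

theorem glue_infiniteLeft (hZ : support Z ⊆ Iic m) : glue Z m infiniteLeft = Z := by
  funext i
  by_cases hi : i ≤ m
  · simp [glue, hi]
  · have hZi : Z i = 0 := notMem_support.1 fun h => hi (hZ h)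
    simp [glue, infiniteLeft, hi, hZi, show ¬ i - m ≤ 0 by omega]

theorem Nballs_glue (hj : 1 ≤ j) : Nballs (glue Z m V) (m + j) = Nballs V j := by
  rw [Nballs_eq_tsum_indicator, Nballs_eq_tsum_indicator, ← (Equiv.addLeft m).tsum_eq]
  congr 1
  funext i
  simp only [Equiv.coe_addLeft, indicator, mem_Ici, glue, add_le_add_iff_left,
    add_sub_cancel_left]
  split_ifs <;> first | rfl | omega

theorem Nballs_one_add_one_le_Nballs_glue (hm : m ∈ support Z) :
    Nballs V 1 + 1 ≤ Nballs (glue Z m V) m := by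
  rw [Nballs_eq_add_Nballs_add_one (glue Z m V), Nballs_glue le_rfl, add_comm (glue Z m V m)]
  exact add_le_add_right (Order.one_le_iff_ne_zero.2 (by simpa [glue] using hm)) _

theorem Bpos_glue (hm : m ∈ support Z) (hV : support V = Iic mV) (hV0 : ∀ j ≤ 0, V j = ⊤)
    (ha : 1 ≤ a) (haV : a ≤ Nballs V 1 + 1) : Bpos (glue Z m V) a = m + Bpos V a := by
  have hb := one_le_Bpos hV hV0 ha
  apply Bpos_eq_of_Nballs_lt_of_le
  · rw [Nballs_glue hb]
    exact Nballs_Bpos_lt hV ha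
  · rcases hb.eq_or_lt with hb1 | hb1
    · rw [← hb1, add_sub_cancel_right]
      exact haV.trans (Nballs_one_add_one_le_Nballs_glue hm)
    · rw [add_sub_assoc, Nballs_glue (by omega)]
      exact le_Nballs_of_lt_Bpos hV (by omega)

theorem Phi_glue (hm : m ∈ support Z) (hV : support V = Iic mV) (hV0 : ∀ j ≤ 0, V j = ⊤)
    (ha : 1 ≤ a) (haV : a ≤ Nballs V 1 + 1) : Phi a (glue Z m V) = glue Z m (Phi a V) := by
  have hb := one_le_Bpos hV hV0 ha
  funext i
  simp only [Phi, glue, Bpos_glue hm hV hV0 ha haV]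
  split_ifs <;> first | rfl | omega | simp

theorem applyWord_glue {β : List ℕ} (hZ : IsGreatest (support Z) m) (hβ : IsRenovating β) :
    applyWord Z β = glue Z m (applyWord infiniteLeft β) := by
  induction β using List.reverseRecOn with
  | nil => exact (glue_infiniteLeft hZ.2).symm
  | append_singleton β a ih =>
    obtain ⟨hβ', ha, haβ⟩ := isRenovating_append_singleton.1 hβ
    obtain ⟨mV, hV⟩ := exists_support_applyWord_eq_Iic support_infiniteLeft hβ'.one_le
    rw [applyWord_append_singleton, applyWord_append_singleton, ih hβ',
      Phi_glue hZ.1 hV (applyWord_infiniteLeft_of_nonpos β) ha]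
    rw [Nballs_applyWord_infiniteLeft_one hβ'.one_le]
    exact_mod_cast haβ

end Glue

theorem inP_append_iff_inP_infiniteLeft {X : Config} {m : ℤ} {δ γ : List ℕ}
    (hX : support X = Iic m) (hδ : ∀ a ∈ δ, 1 ≤ a) (hγ : IsRenovating γ)
    (hγ0 : γ ≠ []) :
    inP X (δ ++ γ) ↔ inP infiniteLeft γ := by
  obtain ⟨β, a, rfl⟩ := (List.eq_nil_or_concat' γ).resolve_left hγ0
  obtain ⟨hβ, ha, haβ⟩ := isRenovating_append_singleton.1 hγ
  obtain ⟨mZ, hZ⟩ := exists_support_applyWord_eq_Iic hX hδ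
  obtain ⟨mV, hV⟩ := exists_support_applyWord_eq_Iic support_infiniteLeft hβ.one_le
  have haV : (a : ℕ∞) ≤ Nballs (applyWord infiniteLeft β) 1 + 1 := by
    rw [Nballs_applyWord_infiniteLeft_one hβ.one_le]
    exact_mod_cast haβ
  rw [← List.append_assoc, inP_append_singleton_iff, inP_append_singleton_iff, applyWord_append,
    applyWord_glue (hZ ▸ isGreatest_Iic) hβ, Bpos_glue (hZ ▸ isGreatest_Iic).1 hV
      (applyWord_infiniteLeft_of_nonpos β) ha haV]
  have hb := one_le_Bpos hV (applyWord_infiniteLeft_of_nonpos β) ha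
  simp only [glue]
  rw [if_neg (by omega), add_sub_cancel_left]

theorem eps_eq_zero_of_renovation_general (X : Config) (hX : IsAdmissible X) (α : List ℕ)
    (hα : ∀ a ∈ α, 1 ≤ a) (n : ℕ) (hn : 2 ≤ n)
    (hnl : n ≤ α.length)
    (hren : ∀ k : ℕ, k ≤ α.length - n → α.getD (n + k - 1) 0 ≤ k + 1) :
    eps X α = 0 := by
  obtain ⟨⟨m, hm⟩, -⟩ := hX
  have hδ : α.take (n - 1) ≠ [] := List.ne_nil_of_length_pos (by simp; omega)
  have hδ1 : ∀ a ∈ α.take (n - 1), 1 ≤ a := fun a ha => hα a (List.mem_of_mem_take ha)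
  have hγ : α.drop (n - 1) ≠ [] := List.ne_nil_of_length_pos (by simp; omega)
  have hγren : IsRenovating (α.drop (n - 1)) := by
    intro k hk
    rw [List.length_drop] at hk
    rw [List.getElem_drop]
    refine ⟨hα _ (List.getElem_mem _), ?_⟩
    have := hren k (by omega)
    rwa [show n + k - 1 = n - 1 + k by omega, List.getD_eq_getElem] at this
  have key : inP X α ↔ inP X α.tail := by
    rw [← List.take_append_drop (n - 1) α, List.tail_append_of_ne_nil hδ,
      inP_append_iff_inP_infiniteLeft (Set.ext hm) hδ1 hγren hγ,
      inP_append_iff_inP_infiniteLeft (Set.ext hm) (fun a ha => hδ1 a (List.mem_of_mem_tail ha))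
        hγren hγ]
  rw [eps, if_congr key rfl rfl, sub_self]

/-- If a word α of length ≥ 2 has a renovation event at some position n ≥ 2,
meaning α_{n+k} ≤ k+1 for all 0 ≤ k ≤ L(α) - n, then ε_X(α) = 0. -/
theorem eps_eq_zero_of_renovation (X : Config) (hX : IsAdmissible X) (α : List ℕ)
    (hα : ∀ a ∈ α, 1 ≤ a) (hlen : 2 ≤ α.length) (n : ℕ) (hn : 2 ≤ n)
    (hnl : n ≤ α.length)
    (hren : ∀ k : ℕ, k ≤ α.length - n → α.getD (n + k - 1) 0 ≤ k + 1) :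
    eps X α = 0 :=
  eps_eq_zero_of_renovation_general X hX α hα n hn hnl hren
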